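/- Under the assumptions of the main CLT (Assumption (M1), Lipschitz f_1,…,f_M, weights satisfying (W1) and (W2)), for each fixed u ∈ ℕ the remainder term H_{u,n} := n^{−1/2} ∑_{j=0}^{u−1} ( ∑_{t=1}^{j} W_{t,j}^{(n)} − ∑_{t=n+1}^{n+j} W_{t,j}^{(n)} ), where W_{t,j}^{(n)} := ∑_{m=1}^{M} a_{t,m}^{(n)} U_{t,j,m}, converges to 0 in probability as n → ∞. -/

import Mathlib

/-! The weights vanish beyond `n`, so the upper boundary sum is identically zero, and the lower
one is a sum of finitely many terms `(a_{t,m}/√n) U_{t,j,m}(ω)` with `1 ≤ t ≤ j < u` fixed, each of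
which tends to `0` pointwise by (W2). Pointwise convergence implies convergence in probability. -/

noncomputable section
open MeasureTheory ProbabilityTheory Filter Topology

namespace PaperCLT

variable {Ω : Type} [MeasurableSpace Ω]

abbrev Evec (k : ℕ) := EuclideanSpace ℝ (Fin k)

/-- Covariance of two real-valued random variables. -/
def cov (P : Measure Ω) (f g : Ω → ℝ) : ℝ :=
  (∫ ω, f ω * g ω ∂P) - (∫ ω, f ω ∂P) * (∫ ω, g ω ∂P)

/-- The σ-algebra generated by `Z t, Z (t-1), …`. -/
def filtr {k : ℕ} (Z : ℤ → Ω → Evec k) (t : ℤ) : MeasurableSpace Ω :=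
  ⨆ i ∈ Set.Iic t, MeasurableSpace.comap (Z i) inferInstance

/-- Assumption (M1). -/
structure M1 (k : ℕ) (P : Measure Ω) (A : ℕ → Evec k →L[ℝ] Evec k)
    (Z : ℤ → Ω → Evec k) (X : ℤ → Ω → Evec k) : Prop where
  prob : IsProbabilityMeasure P
  meas : ∀ t, Measurable (Z t)
  indep : iIndepFun Z P
  ident : ∀ t, P.map (Z t) = P.map (Z 0)
  mean_zero : (∫ ω, Z 0 ω ∂P) = 0
  sq_int : Integrable (fun ω => ‖Z 0 ω‖ ^ 2) P
  A_summable : Summable fun j => ‖A j‖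
  X_eq : ∀ t ω, X t ω = ∑' j : ℕ, A j (Z (t - (j : ℤ)) ω)

/-- Martingale-difference terms `U_{t,j}`. -/
def U {k : ℕ} (P : Measure Ω) (Z : ℤ → Ω → Evec k) (X : ℤ → Ω → Evec k)
    (f : Evec k → ℝ) (t : ℤ) (j : ℕ) : Ω → ℝ :=
  P[(fun ω => f (X t ω))|filtr Z (t - j)] - P[(fun ω => f (X t ω))|filtr Z (t - j - 1)]

/-- Weights vanish outside `{1,…,n}`. -/
def WeightsZero (M : ℕ) (a : ℕ → ℤ → Fin M → ℝ) : Prop :=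
  ∀ (n : ℕ) (t : ℤ) (m : Fin M), (t < 1 ∨ (n : ℤ) < t) → a n t m = 0

/-- Condition (W1). -/
def W1 (M : ℕ) (a : ℕ → ℤ → Fin M → ℝ) (G : Fin M → Fin M → ℤ → ℝ) : Prop :=
  ∀ (m ℓ : Fin M) (h : ℤ),
    Tendsto (fun n : ℕ =>
        (1 / (n : ℝ)) * ∑ t ∈ Finset.Icc (1 : ℤ) (n : ℤ), a n t m * a n (t + h) ℓ)
      atTop (𝓝 (G m ℓ h))

/-- Condition (W2): the maximal weight is `o(√n)`. -/
def W2 (M : ℕ) (a : ℕ → ℤ → Fin M → ℝ) : Prop :=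
  ∀ ε : ℝ, 0 < ε → ∃ N : ℕ, ∀ n ≥ N, ∀ (t : ℤ) (m : Fin M), |a n t m| ≤ ε * Real.sqrt n

/-- Convergence in distribution (weak convergence of the pushforward laws). -/
def TendstoInDistribution {α : Type} [MeasurableSpace α] [TopologicalSpace α]
    (P : Measure Ω) (S : ℕ → Ω → α) (μlim : Measure α) : Prop :=
  ∀ g : BoundedContinuousFunction α ℝ,
    Tendsto (fun n => ∫ ω, g (S n ω) ∂P) atTop (𝓝 (∫ x, g x ∂μlim))

/-- A centered Gaussian law on `ℝ^M` with covariance matrix `C`,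
characterized through one-dimensional projections. -/
def IsCenteredGaussianVec {M : ℕ} (μ : Measure (Fin M → ℝ))
    (C : Matrix (Fin M) (Fin M) ℝ) : Prop :=
  IsProbabilityMeasure μ ∧
    ∀ l : Fin M → ℝ,
      μ.map (fun x => ∑ i, l i * x i)
        = gaussianReal 0 (Real.toNNReal (∑ i, ∑ j, l i * C i j * l j))


/-- The weighted martingale-difference terms `W_{t,j}^{(n)} = ∑_m a_{t,m}^{(n)} U_{t,j,m}`. -/
def Wwt {Ω : Type} [MeasurableSpace Ω] {k M : ℕ} (P : Measure Ω)
    (Z X : ℤ → Ω → Evec k) (f : Fin M → Evec k → ℝ)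
    (a : ℕ → ℤ → Fin M → ℝ) (n : ℕ) (t : ℤ) (j : ℕ) : Ω → ℝ :=
  fun ω => ∑ m : Fin M, a n t m * U P Z X (f m) t j ω

/-- The martingale-difference array `M_{t,n}(u) = n^{-1/2} ∑_{j<u} ∑_m a_{t+j,m}^{(n)} U_{t+j,j,m}`. -/
def Mtn {Ω : Type} [MeasurableSpace Ω] {k M : ℕ} (P : Measure Ω)
    (Z X : ℤ → Ω → Evec k) (f : Fin M → Evec k → ℝ)
    (a : ℕ → ℤ → Fin M → ℝ) (u n : ℕ) (t : ℤ) : Ω → ℝ :=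
  fun ω => (1 / Real.sqrt n) *
    ∑ j ∈ Finset.range u, ∑ m : Fin M, a n (t + (j : ℤ)) m * U P Z X (f m) (t + (j : ℤ)) j ω

theorem filtr_le {k : ℕ} {Z : ℤ → Ω → Evec k} (hZ : ∀ t, Measurable (Z t)) (s : ℤ) :
    filtr Z s ≤ ‹MeasurableSpace Ω› :=
  iSup₂_le fun i _ => (hZ i).comap_le

theorem aestronglyMeasurable_U {k : ℕ} {P : Measure Ω} {Z : ℤ → Ω → Evec k}
    (hZ : ∀ t, Measurable (Z t)) (X : ℤ → Ω → Evec k) (f : Evec k → ℝ) (t : ℤ) (j : ℕ) :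
    AEStronglyMeasurable (U P Z X f t j) P :=
  (stronglyMeasurable_condExp.mono (filtr_le hZ _)).aestronglyMeasurable.sub
    (stronglyMeasurable_condExp.mono (filtr_le hZ _)).aestronglyMeasurable

theorem aestronglyMeasurable_Wwt {k M : ℕ} {P : Measure Ω} {Z : ℤ → Ω → Evec k}
    (hZ : ∀ t, Measurable (Z t)) (X : ℤ → Ω → Evec k) (f : Fin M → Evec k → ℝ)
    (a : ℕ → ℤ → Fin M → ℝ) (n : ℕ) (t : ℤ) (j : ℕ) :
    AEStronglyMeasurable (Wwt P Z X f a n t j) P :=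
  Finset.aestronglyMeasurable_fun_sum _ fun m _ => (aestronglyMeasurable_U hZ X (f m) t j).const_mul _

theorem tendsto_inv_sqrt_mul_weight {M : ℕ} {a : ℕ → ℤ → Fin M → ℝ} (hW2 : W2 M a)
    (t : ℤ) (m : Fin M) :
    Tendsto (fun n : ℕ => (1 / Real.sqrt n) * a n t m) atTop (𝓝 0) := by
  rw [Metric.tendsto_atTop]
  intro ε hε
  obtain ⟨N, hN⟩ := hW2 (ε / 2) (half_pos hε)
  refine ⟨N, fun n hn => ?_⟩
  -- `div_le_of_le_mul₀` also covers `n = 0`, where `1 / √0 = 0`.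
  calc dist ((1 / Real.sqrt n) * a n t m) 0 = |a n t m| / Real.sqrt n := by
        rw [Real.dist_eq, sub_zero, one_div_mul_eq_div, abs_div, abs_of_nonneg (Real.sqrt_nonneg _)]
    _ ≤ ε / 2 := div_le_of_le_mul₀ (Real.sqrt_nonneg _) (half_pos hε).le (hN n hn t m)
    _ < ε := half_lt_self hε

theorem tendsto_inv_sqrt_mul_Wwt {k M : ℕ} (P : Measure Ω) (Z X : ℤ → Ω → Evec k)
    (f : Fin M → Evec k → ℝ) {a : ℕ → ℤ → Fin M → ℝ} (hW2 : W2 M a) (t : ℤ) (j : ℕ) (ω : Ω) :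
    Tendsto (fun n : ℕ => (1 / Real.sqrt n) * Wwt P Z X f a n t j ω) atTop (𝓝 0) := by
  simp only [Wwt, Finset.mul_sum, ← mul_assoc]
  simpa using tendsto_finsetSum Finset.univ fun m _ =>
    (tendsto_inv_sqrt_mul_weight hW2 t m).mul_const (U P Z X (f m) t j ω)

theorem sum_Wwt_Icc_succ_eq_zero {k M : ℕ} (P : Measure Ω) (Z X : ℤ → Ω → Evec k)
    (f : Fin M → Evec k → ℝ) {a : ℕ → ℤ → Fin M → ℝ} (hzero : WeightsZero M a)
    (n j : ℕ) (ω : Ω) :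
    ∑ t ∈ Finset.Icc ((n : ℤ) + 1) ((n : ℤ) + (j : ℤ)), Wwt P Z X f a n t j ω = 0 :=
  Finset.sum_eq_zero fun t ht => Finset.sum_eq_zero fun m _ => by
    rw [hzero n t m (Or.inr (by linarith [(Finset.mem_Icc.mp ht).1])), zero_mul]

theorem statement7_general
    {Ω : Type} [MeasurableSpace Ω] (k M : ℕ) (P : Measure Ω)
    (A : ℕ → Evec k →L[ℝ] Evec k) (Z X : ℤ → Ω → Evec k)
    (hM1 : M1 k P A Z X)
    (f : Fin M → Evec k → ℝ)
    (a : ℕ → ℤ → Fin M → ℝ)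
    (hzero : WeightsZero M a) (hW2 : W2 M a)
    (u : ℕ) :
    TendstoInMeasure P
      (fun (n : ℕ) ω =>
        (1 / Real.sqrt n) *
          ∑ j ∈ Finset.range u,
            ((∑ t ∈ Finset.Icc (1 : ℤ) (j : ℤ), Wwt P Z X f a n t j ω) -
              ∑ t ∈ Finset.Icc ((n : ℤ) + 1) ((n : ℤ) + (j : ℤ)), Wwt P Z X f a n t j ω))
      atTop (fun _ => (0 : ℝ)) := by
  have := hM1.prob
  have hW : ∀ n t j, AEStronglyMeasurable (Wwt P Z X f a n t j) P :=
    aestronglyMeasurable_Wwt hM1.meas X f a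
  refine tendstoInMeasure_of_tendsto_ae (fun n => ?_) (ae_of_all _ fun ω => ?_)
  · exact (Finset.aestronglyMeasurable_fun_sum _ fun j _ =>
      (Finset.aestronglyMeasurable_fun_sum _ fun t _ => hW n t j).sub
        (Finset.aestronglyMeasurable_fun_sum _ fun t _ => hW n t j)).const_mul _
  · simp only [sum_Wwt_Icc_succ_eq_zero P Z X f hzero, sub_zero, Finset.mul_sum]
    simpa using tendsto_finsetSum (Finset.range u) fun j _ =>
      tendsto_finsetSum (Finset.Icc (1 : ℤ) j) fun t _ => tendsto_inv_sqrt_mul_Wwt P Z X f hW2 t j ω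

/-- the boundary remainder `H_{u,n}` vanishes in probability. -/
theorem statement7
    {Ω : Type} [MeasurableSpace Ω] (k M : ℕ) (P : Measure Ω)
    (A : ℕ → Evec k →L[ℝ] Evec k) (Z X : ℤ → Ω → Evec k)
    (hM1 : M1 k P A Z X)
    (f : Fin M → Evec k → ℝ) (hf : ∀ m, ∃ C : NNReal, LipschitzWith C (f m))
    (a : ℕ → ℤ → Fin M → ℝ) (G : Fin M → Fin M → ℤ → ℝ)
    (hzero : WeightsZero M a) (hW1 : W1 M a G) (hW2 : W2 M a)
    (u : ℕ) :
    TendstoInMeasure P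
      (fun (n : ℕ) ω =>
        (1 / Real.sqrt n) *
          ∑ j ∈ Finset.range u,
            ((∑ t ∈ Finset.Icc (1 : ℤ) (j : ℤ), Wwt P Z X f a n t j ω) -
              ∑ t ∈ Finset.Icc ((n : ℤ) + 1) ((n : ℤ) + (j : ℤ)), Wwt P Z X f a n t j ω))
      atTop (fun _ => (0 : ℝ)) :=
  statement7_general k M P A Z X hM1 f a hzero hW2 u

end PaperCLT
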